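/- Let (n,m,k,l) be natural numbers with m ≤ n−m, k ≤ n, m+k−n ≤ l and l ≤ min(m,k). Then for every integer x with k < x ≤ m, the explicit Racah-presentation pmf vanishes: p(x | n,m,k,l) = 0. Consequently the support of the distribution P_{n,m,k,l} is contained in {0,1,…, min(m, n−m, k)}. -/

import Mathlib

/-!
Writing `(-b)_r = (-1)^r r! C(b,r)`, the `r`-th summand of the `₄F₃` sum becomes
`(-1)^r C(M,r) p(r) / D` with `D` independent of `r` and
`p(r) = C(m-r, m-x) C(n-m-r, n-m-N) C(M+N-r, M+N+x-n-1)`, a polynomial in `r` of degree `M - 1`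
(this is where `n < M + N + x`, i.e. `k < x`, enters). Since `p` vanishes at
`min(x,N) < r ≤ M`, the sum is the full alternating sum `∑_{r ≤ M} (-1)^r C(M,r) p(r)`, an `M`-th
finite difference of a polynomial of degree `< M`, hence zero.
-/

open Finset

/-- Rising factorial `(a)_r = a(a+1)⋯(a+r−1)` in `ℚ`. -/
noncomputable def risingFac (a : ℚ) (r : ℕ) : ℚ := ∏ j ∈ Finset.range r, (a + j)

/-- The terminating `₄F₃`-hypergeometric (Racah polynomial) sum
`∑_{r=0}^{min(x,M,N)} ((−x)_r (x−n−1)_r (−M)_r (−N)_r)/(r! (−m)_r (m−n)_r (−M−N)_r)`. -/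
noncomputable def racahSum (n m M N x : ℕ) : ℚ :=
  ∑ r ∈ Finset.range (min x (min M N) + 1),
    risingFac (-(x : ℚ)) r * risingFac ((x : ℚ) - n - 1) r * risingFac (-(M : ℚ)) r *
        risingFac (-(N : ℚ)) r /
      ((r.factorial : ℚ) * risingFac (-(m : ℚ)) r * risingFac ((m : ℚ) - n) r *
        risingFac (-((M : ℚ) + N)) r)

/-- The explicit Racah-presentation probability mass function `p(x | n,m,k,l)`,
with `M := m−l` and `N := n−m−k+l` (realized as `n+l-m-k` in `ℕ`). -/
noncomputable def racahPMF (n m k l x : ℕ) : ℚ :=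
  ((n - k).choose (m - l) : ℚ) * ((n.choose x : ℚ) / (n.choose m : ℚ)) *
    (((n : ℚ) - 2 * x + 1) / ((n : ℚ) - x + 1)) *
    racahSum n m (m - l) (n + l - m - k) x

open Polynomial
open scoped Nat

theorem Polynomial.sum_range_neg_one_pow_mul_choose_mul_eval_eq_zero {R : Type*} [CommRing R]
    {P : R[X]} {n : ℕ} (hP : P.natDegree < n) :
    ∑ k ∈ range (n + 1), (-1) ^ k * (n.choose k : R) * P.eval (k : R) = 0 := by
  have h := congr_fun (fwdDiff_iter_eq_zero_of_degree_lt hP) 0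
  rw [fwdDiff_iter_eq_sum_shift, Pi.zero_apply] at h
  calc ∑ k ∈ range (n + 1), (-1) ^ k * (n.choose k : R) * P.eval (k : R)
      = (-1) ^ n * ∑ k ∈ range (n + 1),
          ((-1 : ℤ) ^ (n - k) * n.choose k) • P.eval (0 + k • (1 : R)) := by
        rw [mul_sum]
        refine sum_congr rfl fun k hk => ?_
        obtain ⟨j, rfl⟩ := Nat.exists_eq_add_of_le (mem_range_succ_iff.mp hk)
        have hsq : (-1 : R) ^ j * (-1) ^ j = 1 := by rw [← mul_pow]; simp
        simp only [Nat.add_sub_cancel_left, zsmul_eq_mul, nsmul_eq_mul, mul_one, zero_add]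
        push_cast
        linear_combination (-(-1 : R) ^ k * ((k + j).choose k : R) * P.eval (k : R)) * hsq
    _ = 0 := by rw [h, mul_zero]

theorem risingFac_neg_natCast (b r : ℕ) :
    risingFac (-(b : ℚ)) r = (-1) ^ r * r ! * b.choose r := by
  have h : risingFac (-(b : ℚ)) r = ∏ j ∈ range r, (-1) * ((b : ℚ) - j) :=
    prod_congr rfl fun j _ => by ring
  rw [h, prod_mul_distrib, prod_const, card_range, ← descPochhammer_eval_eq_prod_range,
    descPochhammer_eval_eq_descFactorial, Nat.descFactorial_eq_factorial_mul_choose]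
  push_cast
  ring

theorem Nat.cast_choose_div_cast_choose {K : Type*} [Field K] [CharZero K] {r v u : ℕ}
    (hrv : r ≤ v) (hvu : v ≤ u) :
    (v.choose r : K) / u.choose r = (u - r).choose (u - v) / u.choose v := by
  have hur : (u.choose r : K) ≠ 0 := Nat.cast_ne_zero.mpr (Nat.choose_pos (hrv.trans hvu)).ne'
  have huv : (u.choose v : K) ≠ 0 := Nat.cast_ne_zero.mpr (Nat.choose_pos hvu).ne'
  have h : u.choose v * v.choose r = u.choose r * (u - r).choose (u - v) := by
    rw [Nat.choose_mul hrv, ← Nat.choose_symm (Nat.sub_le_sub_right hvu r),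
      Nat.sub_sub_sub_cancel_right hrv]
  rw [div_eq_div_iff hur huv]
  exact_mod_cast by rw [mul_comm, h, mul_comm]

noncomputable def subChoosePoly (K : Type*) [Field K] (u v : ℕ) : K[X] :=
  C (v ! : K)⁻¹ * (descPochhammer K v).comp (C (u : K) - X)

theorem natDegree_subChoosePoly_le (K : Type*) [Field K] (u v : ℕ) :
    (subChoosePoly K u v).natDegree ≤ v := by
  refine (natDegree_C_mul_le _ _).trans <| natDegree_comp_le.trans ?_
  have hlin : (C (u : K) - X).natDegree ≤ 1 := (natDegree_sub_le _ _).trans (by simp)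
  simpa [descPochhammer_natDegree] using Nat.mul_le_mul_left v hlin

theorem eval_subChoosePoly {K : Type*} [Field K] [CharZero K] {r u : ℕ} (v : ℕ)
    (hru : r ≤ u) :
    (subChoosePoly K u v).eval (r : K) = (u - r).choose v := by
  have hfac : (v ! : K) ≠ 0 := Nat.cast_ne_zero.mpr v.factorial_ne_zero
  rw [subChoosePoly, eval_mul, eval_C, eval_comp, eval_sub, eval_C, eval_X, ← Nat.cast_sub hru,
    descPochhammer_eval_eq_descFactorial, Nat.descFactorial_eq_factorial_mul_choose]
  push_cast
  field_simp

noncomputable def racahSummand (n m M N x r : ℕ) : ℚ :=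
  risingFac (-(x : ℚ)) r * risingFac ((x : ℚ) - n - 1) r * risingFac (-(M : ℚ)) r *
      risingFac (-(N : ℚ)) r /
    ((r ! : ℚ) * risingFac (-(m : ℚ)) r * risingFac ((m : ℚ) - n) r *
      risingFac (-((M : ℚ) + N)) r)

theorem racahSummand_eq_choose {n m M N x : ℕ} (r : ℕ) (hxn : x ≤ n + 1) (hmn : m ≤ n) :
    racahSummand n m M N x r = (-1) ^ r * M.choose r * (x.choose r / m.choose r) *
      (N.choose r / (n - m).choose r) * ((n + 1 - x).choose r / (M + N).choose r) := by
  have hx : (x : ℚ) - n - 1 = -((n + 1 - x : ℕ) : ℚ) := by push_cast [Nat.cast_sub hxn]; ring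
  have hm : (m : ℚ) - n = -((n - m : ℕ) : ℚ) := by push_cast [Nat.cast_sub hmn]; ring
  have hMN : -((M : ℚ) + N) = -((M + N : ℕ) : ℚ) := by push_cast; ring
  rw [racahSummand, hx, hm, hMN]
  simp only [risingFac_neg_natCast]
  field_simp

theorem racahSum_eq_sum_racahSummand (n m M N x : ℕ) :
    racahSum n m M N x = ∑ r ∈ range (min x (min M N) + 1), racahSummand n m M N x r := rfl

theorem racahSum_eq_zero {n m M N x : ℕ} (hxm : x ≤ m) (hMm : M ≤ m) (hmM : m + M ≤ n)
    (hmN : m + N ≤ n) (hx : n < M + N + x) : racahSum n m M N x = 0 := by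
  set p : ℚ[X] := subChoosePoly ℚ m (m - x) * subChoosePoly ℚ (n - m) (n - m - N) *
    subChoosePoly ℚ (M + N) (M + N + x - (n + 1))
  set D : ℚ := m.choose x * (n - m).choose N * (M + N).choose (n + 1 - x)
  have hdeg : p.natDegree < M := by
    have : p.natDegree ≤ (m - x) + (n - m - N) + (M + N + x - (n + 1)) :=
      natDegree_mul_le_of_le (natDegree_mul_le_of_le (natDegree_subChoosePoly_le ℚ _ _)
        (natDegree_subChoosePoly_le ℚ _ _)) (natDegree_subChoosePoly_le ℚ _ _)
    omega
  have heval : ∀ r ≤ M, p.eval (r : ℚ) =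
      (m - r).choose (m - x) * (n - m - r).choose (n - m - N) *
        (M + N - r).choose (M + N + x - (n + 1)) := fun r hr => by
    simp only [p, eval_mul, eval_subChoosePoly _ (show r ≤ m by omega),
      eval_subChoosePoly _ (show r ≤ n - m by omega),
      eval_subChoosePoly _ (show r ≤ M + N by omega)]
  have hterm : ∀ r ∈ range (min x (min M N) + 1),
      racahSummand n m M N x r = (-1) ^ r * M.choose r * p.eval (r : ℚ) / D := fun r hr => by
    have hr := mem_range_succ_iff.mp hr
    rw [racahSummand_eq_choose r (by omega) (by omega), heval r (by omega),
      Nat.cast_choose_div_cast_choose (show r ≤ x by omega) hxm,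
      Nat.cast_choose_div_cast_choose (show r ≤ N by omega) (show N ≤ n - m by omega),
      Nat.cast_choose_div_cast_choose (show r ≤ n + 1 - x by omega)
        (show n + 1 - x ≤ M + N by omega),
      show M + N - (n + 1 - x) = M + N + x - (n + 1) by omega]
    ring
  have hvanish : ∀ r ∈ range (M + 1), r ∉ range (min x (min M N) + 1) →
      (-1) ^ r * M.choose r * p.eval (r : ℚ) / D = 0 := fun r hr hr' => by
    rw [mem_range_succ_iff] at hr
    rw [mem_range_succ_iff, not_le] at hr'
    rcases (show x < r ∨ N < r by omega) with h | h
    · rw [heval r hr, Nat.choose_eq_zero_of_lt (show m - r < m - x by omega)]; simp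
    · rw [heval r hr, Nat.choose_eq_zero_of_lt (show n - m - r < n - m - N by omega)]; simp
  calc racahSum n m M N x
      = ∑ r ∈ range (M + 1), (-1) ^ r * M.choose r * p.eval (r : ℚ) / D := by
        rw [racahSum_eq_sum_racahSummand, sum_congr rfl hterm]
        exact sum_subset (range_subset_range.mpr (by omega)) hvanish
    _ = (∑ r ∈ range (M + 1), (-1) ^ r * M.choose r * p.eval (r : ℚ)) / D := (sum_div ..).symm
    _ = 0 := by rw [sum_range_neg_one_pow_mul_choose_mul_eval_eq_zero hdeg, zero_div]

theorem racahPMF_eq_zero_of_gt_general (n m k l : ℕ) (hm : 2 * m ≤ n)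
    (hl : m + k ≤ n + l) (hlm : l ≤ m) (hlk : l ≤ k)
    (x : ℕ) (hkx : k < x) (hxm : x ≤ m) :
    racahPMF n m k l x = 0 := by
  rw [racahPMF, racahSum_eq_zero hxm (by omega) (by omega) (by omega) (by omega), mul_zero]

/-- **Support of the distribution** `P_{n,m,k,l}`: the Racah-presentation pmf
vanishes for `k < x ≤ m`, so the support is contained in `{0,…,min(m,n−m,k)}`. -/
theorem racahPMF_eq_zero_of_gt (n m k l : ℕ) (hm : 2 * m ≤ n) (hk : k ≤ n)
    (hl : m + k ≤ n + l) (hlm : l ≤ m) (hlk : l ≤ k)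
    (x : ℕ) (hkx : k < x) (hxm : x ≤ m) :
    racahPMF n m k l x = 0 :=
  racahPMF_eq_zero_of_gt_general n m k l hm hl hlm hlk x hkx hxm
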